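/- Let E, F, G be real compactly generated vector spaces with topologies τE, τF, τG, let U be τE-open, and let f₁ be a function assigning to each x ∈ U a linear map f₁(x) : F → G. Define f₁^∧ : U × F → G by (x, v) ↦ f₁(x)(v). Then f₁^∧ is continuous from the Kelleyfication k(τE × τF) of the product topology to τG if and only if each f₁(x) is a continuous linear map F → G and f₁ is continuous from τE into L_cg(F,G), the set of continuous linear maps F → G endowed with the Kelleyfication of the subspace topology induced by the compact-open topology on C(F,G). -/

import Mathlib

open Set Filter Topology

/-- The Kelleyfication of a topology `T`: a set is open iff its trace on every `T`-compact
set agrees with the trace of some `T`-open set. -/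
def Kelley {X : Type*} (T : TopologicalSpace X) : TopologicalSpace X where
  IsOpen U := ∀ K : Set X, @IsCompact X T K → ∃ V : Set X, T.IsOpen V ∧ U ∩ K = V ∩ K
  isOpen_univ K _ := ⟨univ, T.isOpen_univ, rfl⟩
  isOpen_inter := by
    intro s t hs ht K hK
    obtain ⟨Vs, hVs, hsK⟩ := hs K hK
    obtain ⟨Vt, hVt, htK⟩ := ht K hK
    refine ⟨Vs ∩ Vt, T.isOpen_inter _ _ hVs hVt, ?_⟩
    ext x
    have h1 := Set.ext_iff.mp hsK x
    have h2 := Set.ext_iff.mp htK x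
    simp only [Set.mem_inter_iff] at *
    tauto
  isOpen_sUnion := by
    intro S hS K hK
    choose! V hV1 hV2 using fun t (ht : t ∈ S) => hS t ht K hK
    refine ⟨⋃ t ∈ S, V t, ?_, ?_⟩
    · letI := T
      exact isOpen_biUnion fun t ht => hV1 t ht
    · ext x
      simp only [Set.mem_inter_iff, Set.mem_sUnion, Set.mem_iUnion, exists_prop]
      constructor
      · rintro ⟨⟨t, htS, hxt⟩, hxK⟩
        have h := Set.ext_iff.mp (hV2 t htS) x
        simp only [Set.mem_inter_iff] at h
        exact ⟨⟨t, htS, (h.mp ⟨hxt, hxK⟩).1⟩, hxK⟩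
      · rintro ⟨⟨t, htS, hxt⟩, hxK⟩
        have h := Set.ext_iff.mp (hV2 t htS) x
        simp only [Set.mem_inter_iff] at h
        exact ⟨⟨t, htS, (h.mpr ⟨hxt, hxK⟩).1⟩, hxK⟩

/-- The k-extension of a topology `T`: like the Kelleyfication, but quantifying only over
`T`-closed `T`-compact sets. -/
def KelleyEx {X : Type*} (T : TopologicalSpace X) : TopologicalSpace X where
  IsOpen U := ∀ K : Set X, @IsCompact X T K → @IsClosed X T K →
    ∃ V : Set X, T.IsOpen V ∧ U ∩ K = V ∩ K
  isOpen_univ K _ _ := ⟨univ, T.isOpen_univ, rfl⟩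
  isOpen_inter := by
    intro s t hs ht K hK hKc
    obtain ⟨Vs, hVs, hsK⟩ := hs K hK hKc
    obtain ⟨Vt, hVt, htK⟩ := ht K hK hKc
    refine ⟨Vs ∩ Vt, T.isOpen_inter _ _ hVs hVt, ?_⟩
    ext x
    have h1 := Set.ext_iff.mp hsK x
    have h2 := Set.ext_iff.mp htK x
    simp only [Set.mem_inter_iff] at *
    tauto
  isOpen_sUnion := by
    intro S hS K hK hKc
    choose! V hV1 hV2 using fun t (ht : t ∈ S) => hS t ht K hK hKc
    refine ⟨⋃ t ∈ S, V t, ?_, ?_⟩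
    · letI := T
      exact isOpen_biUnion fun t ht => hV1 t ht
    · ext x
      simp only [Set.mem_inter_iff, Set.mem_sUnion, Set.mem_iUnion, exists_prop]
      constructor
      · rintro ⟨⟨t, htS, hxt⟩, hxK⟩
        have h := Set.ext_iff.mp (hV2 t htS) x
        simp only [Set.mem_inter_iff] at h
        exact ⟨⟨t, htS, (h.mp ⟨hxt, hxK⟩).1⟩, hxK⟩
      · rintro ⟨⟨t, htS, hxt⟩, hxK⟩
        have h := Set.ext_iff.mp (hV2 t htS) x
        simp only [Set.mem_inter_iff] at h
        exact ⟨⟨t, htS, (h.mpr ⟨hxt, hxK⟩).1⟩, hxK⟩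

/-- A topology is compactly generated iff it is Hausdorff and equals its Kelleyfication. -/
def IsCG {X : Type*} (T : TopologicalSpace X) : Prop :=
  @T2Space X T ∧ Kelley T = T

/-- Local compactness in the sense of the paper: every point of an open set `V` has an
open neighbourhood contained in a compact subset of `V`. -/
def LocCompact {Y : Type*} (t : TopologicalSpace Y) : Prop :=
  ∀ y : Y, ∀ V : Set Y, t.IsOpen V → y ∈ V →
    ∃ K U : Set Y, y ∈ U ∧ t.IsOpen U ∧ U ⊆ K ∧ K ⊆ V ∧ @IsCompact Y t K

/-- A real compactly generated vector space: a compactly generated topology for which the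
algebraic operations are continuous from the Kelleyfications of the product topologies. -/
def IsCGVS {X : Type*} [AddCommGroup X] [Module ℝ X] (T : TopologicalSpace X) : Prop :=
  IsCG T ∧
  Continuous[Kelley (@instTopologicalSpaceProd X X T T), T] (fun p : X × X => p.1 + p.2) ∧
  Continuous[Kelley (@instTopologicalSpaceProd ℝ X inferInstance T), T]
    (fun p : ℝ × X => p.1 • p.2)

/-- Sequential completeness of a topologized additive group: every Cauchy sequence converges. -/
def SeqComplete {X : Type*} [AddCommGroup X] (U : TopologicalSpace X) : Prop :=
  ∀ u : ℕ → X, (∀ V ∈ @nhds X U 0, ∃ N : ℕ, ∀ m ≥ N, ∀ n ≥ N, u m - u n ∈ V) →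
    ∃ x : X, Filter.Tendsto u Filter.atTop (@nhds X U x)

/-- Seip-convenient space: a compactly generated real vector space whose topology is the
Kelleyfication of a sequentially complete Hausdorff locally convex vector topology. -/
def IsSeipConvenient {X : Type*} [AddCommGroup X] [Module ℝ X] (T : TopologicalSpace X) : Prop :=
  IsCGVS T ∧ ∃ U : TopologicalSpace X,
    @IsTopologicalAddGroup X U _ ∧ @ContinuousSMul ℝ X _ _ U ∧
    @LocallyConvexSpace ℝ X _ _ _ _ U ∧ @T2Space X U ∧ SeqComplete U ∧ T = Kelley U

/-- The compact-open topology on the full function space, generated by the usual subbasis. -/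
def coTop {X Y : Type*} (tX : TopologicalSpace X) (tY : TopologicalSpace Y) :
    TopologicalSpace (X → Y) :=
  TopologicalSpace.generateFrom
    {S | ∃ (K : Set X) (V : Set Y), @IsCompact X tX K ∧ tY.IsOpen V ∧ S = {f | f '' K ⊆ V}}

/-- `γ` is Riemann integrable to `x` on `[a,b]` with respect to the topology `T`. -/
def RiemannIntegrableTo {E : Type*} [AddCommGroup E] [Module ℝ E]
    (T : TopologicalSpace E) (a b : ℝ) (γ : ℝ → E) (x : E) : Prop :=
  ∀ V ∈ @nhds E T x, ∃ δ : ℝ, 0 < δ ∧ ∀ (k : ℕ) (t s : ℕ → ℝ),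
    t 0 = a → t k = b → (∀ i < k, t i ≤ t (i + 1)) →
    (∀ i < k, t (i + 1) - t i < δ) →
    (∀ i < k, t i ≤ s i ∧ s i ≤ t (i + 1)) →
    (∑ i ∈ Finset.range k, (t (i + 1) - t i) • γ (s i)) ∈ V

/-- `c` is differentiable to `x` at `t₀` (within `J`) with respect to the topology `T`. -/
def DiffTo {E : Type*} [AddCommGroup E] [Module ℝ E] (T : TopologicalSpace E)
    (J : Set ℝ) (c : ℝ → E) (t₀ : ℝ) (x : E) : Prop :=
  ∀ V ∈ @nhds E T x, ∃ δ : ℝ, 0 < δ ∧ ∀ t : ℝ, t₀ + t ∈ J → 0 < |t| → |t| < δ →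
    t⁻¹ • (c (t₀ + t) - c t₀) ∈ V


/-! Both sides can be tested on compact sets. Continuity from the Kelleyfication of `U × F` is
continuity on every product `L ×ˢ K` of compacta, and continuity into `C(F, G)` is continuity into
every `C(K, G)` with `K ⊆ F` compact. On `L × K` the two are exchanged by currying in one
direction and, `K` being compact Hausdorff and hence locally compact, by continuity of evaluation
in the other. That `U` (an open subset of a compactly generated Hausdorff space) and `F` are
compactly generated is what assembles these compact-wise statements into continuity. -/

open scoped Set.Notation

section Kelley

variable {X Y Z : Type*}

theorem kelley_le (t : TopologicalSpace X) : Kelley t ≤ t :=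
  fun A hA _ _ => ⟨A, hA, rfl⟩

theorem isOpen_kelley_iff [t : TopologicalSpace X] {A : Set X} :
    IsOpen[Kelley t] A ↔ ∀ K, IsCompact K → IsOpen (K ↓∩ A) := by
  refine forall₂_congr fun K _ => ?_
  simp only [isOpen_induced_iff, Subtype.preimage_coe_eq_preimage_coe_iff, inter_comm K]
  exact exists_congr fun V => and_congr_right fun _ => eq_comm

theorem kelley_eq_self_iff [t : TopologicalSpace X] :
    Kelley t = t ↔ CompactlyCoherentSpace X := by
  refine ⟨fun h => .of_isOpen fun A hA => ?_, fun _ => le_antisymm (kelley_le t) fun A hA => ?_⟩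
  · rw [← h]
    exact isOpen_kelley_iff.2 hA
  · exact CompactlyCoherentSpace.isOpen_iff.2 (isOpen_kelley_iff.1 hA)

variable [TopologicalSpace X] [TopologicalSpace Y] [TopologicalSpace Z]

theorem continuous_kelley_iff {f : X → Y} :
    Continuous[Kelley ‹_›, _] f ↔ ∀ K, IsCompact K → ContinuousOn f K := by
  simp only [continuousOn_iff_continuous_domRestrict, continuous_def, isOpen_kelley_iff]
  exact ⟨fun h K hK V hV => h V hV K hK, fun h V hV K hK => h K hK V hV⟩

theorem continuous_kelley_prod_iff {f : X × Y → Z} :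
    Continuous[Kelley (inferInstance : TopologicalSpace (X × Y)), _] f ↔
      ∀ K L, IsCompact K → IsCompact L → ContinuousOn f (K ×ˢ L) := by
  rw [continuous_kelley_iff]
  refine ⟨fun h K L hK hL => h _ (hK.prod hL), fun h C hC => ?_⟩
  exact (h _ _ (hC.image continuous_fst) (hC.image continuous_snd)).mono
    fun p hp => ⟨mem_image_of_mem _ hp, mem_image_of_mem _ hp⟩

theorem Continuous.kelley_rng [CompactlyCoherentSpace X] {f : X → Y} (hf : Continuous f) :
    Continuous[_, Kelley ‹_›] f := by
  refine continuous_def.2 fun W hW => CompactlyCoherentSpace.isOpen_iff.2 fun K hK => ?_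
  exact (isOpen_kelley_iff.1 hW _ (hK.image hf)).preimage (hf.restrict (mapsTo_image f K))

end Kelley

section OpenSubspace

variable {X : Type*} [TopologicalSpace X]

theorem isOpen_preimage_val_iff_forall_mem_nhdsWithin {K A : Set X} :
    IsOpen (K ↓∩ A) ↔ ∀ x ∈ K ∩ A, A ∈ 𝓝[K] x := by
  simp only [isOpen_iff_mem_nhds, Subtype.forall, mem_preimage, preimage_coe_mem_nhds_subtype]
  exact ⟨fun h x hx => h x hx.1 hx.2, fun h x hxK hxA => h x ⟨hxK, hxA⟩⟩

theorem exists_isCompact_subset_mem_nhdsWithin [T2Space X] {L U : Set X} (hL : IsCompact L)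
    (hU : IsOpen U) {x : X} (hx : x ∈ U) : ∃ K, IsCompact K ∧ K ⊆ L ∩ U ∧ K ∈ 𝓝[L] x := by
  obtain ⟨O, O', hO, hO', hxO, hLO', hOO'⟩ := SeparatedNhds.of_isCompact_isCompact
    isCompact_singleton (hL.diff hU) (disjoint_singleton_left.2 fun h => h.2 hx)
  refine ⟨L \ O', hL.diff hO', fun y hy => ⟨hy.1, by_contra fun hyU => hy.2 (hLO' ⟨hy.1, hyU⟩)⟩,
    mem_nhdsWithin.2 ⟨O, hO, hxO rfl, fun y hy => ⟨hy.2, disjoint_left.1 hOO' hy.1⟩⟩⟩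

/-- Near each of its points in `U`, a compact set is a compact set inside `U`
(`exists_isCompact_subset_mem_nhdsWithin`), so traces on compacta of `U` control traces on all
compacta of `X`. -/
theorem IsOpen.compactlyCoherentSpace [T2Space X] [CompactlyCoherentSpace X] {U : Set X}
    (hU : IsOpen U) : CompactlyCoherentSpace U := by
  refine .of_isOpen fun A hA => ?_
  rw [← preimage_image_eq A Subtype.val_injective]
  refine (CompactlyCoherentSpace.isOpen_iff.2 fun L hL => ?_).preimage continuous_subtype_val
  rw [isOpen_preimage_val_iff_forall_mem_nhdsWithin]
  rintro _ ⟨hxL, x, hxA, rfl⟩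
  obtain ⟨K, hK, hKLU, hKx⟩ := exists_isCompact_subset_mem_nhdsWithin hL hU x.2
  have hKU : K ⊆ range ((↑) : U → X) := by
    rw [Subtype.range_coe]
    exact hKLU.trans inter_subset_right
  have hAx : A ∈ 𝓝[(↑) ⁻¹' K] x :=
    isOpen_preimage_val_iff_forall_mem_nhdsWithin.1
      (hA _ (IsInducing.subtypeVal.isCompact_preimage' hK hKU)) x
      ⟨(mem_of_mem_nhdsWithin hxL hKx :), hxA⟩
  have hAx' := image_mem_map (m := ((↑) : U → X)) hAx
  rw [IsEmbedding.subtypeVal.map_nhdsWithin_eq, image_preimage_eq_of_subset hKU] at hAx'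
  rwa [nhdsWithin_restrict'' L hKx, inter_eq_right.2 (hKLU.trans inter_subset_left)]

end OpenSubspace

section Curry

variable {X F G : Type*} [TopologicalSpace X] [TopologicalSpace F] [TopologicalSpace G]

theorem ContinuousMap.continuous_iff_forall_continuous_restrict {g : X → C(F, G)} :
    Continuous g ↔ ∀ K, IsCompact K → Continuous fun x => (g x).restrict K := by
  simp only [continuous_iff_continuousAt, ContinuousAt]
  simp_rw [tendsto_compactOpen_iff_forall g]
  exact ⟨fun h K hK x => h x K hK, fun h x K hK => h K hK x⟩

theorem continuous_apply_of_continuous_kelley_uncurry [CompactlyCoherentSpace F]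
    {f : X → F → G}
    (h : Continuous[Kelley (inferInstance : TopologicalSpace (X × F)), _]
      (fun p : X × F => f p.1 p.2)) (x : X) :
    Continuous (f x) :=
  CompactlyCoherentSpace.isCoherentWith.continuous_iff.2 fun K hK =>
    (continuous_kelley_prod_iff.1 h {x} K isCompact_singleton hK).comp
      (continuousOn_const.prodMk continuousOn_id) fun _ hv => ⟨rfl, hv⟩

theorem continuous_curry_of_continuous_kelley_uncurry [CompactlyCoherentSpace X]
    {f : X → F → G}
    (h : Continuous[Kelley (inferInstance : TopologicalSpace (X × F)), _]
      (fun p : X × F => f p.1 p.2)) (hc : ∀ x, Continuous (f x)) :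
    Continuous fun x => (⟨f x, hc x⟩ : C(F, G)) := by
  refine CompactlyCoherentSpace.isCoherentWith.continuous_iff.2 fun L hL => ?_
  rw [continuousOn_iff_continuous_domRestrict,
    ContinuousMap.continuous_iff_forall_continuous_restrict]
  intro K hK
  have hLK : Continuous fun p : L × K => f p.1 p.2 :=
    (continuous_kelley_prod_iff.1 h L K hL hK).comp_continuous
      (continuous_subtype_val.prodMap continuous_subtype_val) fun p => ⟨p.1.2, p.2.2⟩
  exact (ContinuousMap.curry ⟨_, hLK⟩).continuous

theorem continuous_kelley_uncurry_of_continuous_curry [T2Space F] {f : X → F → G}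
    (hc : ∀ x, Continuous (f x)) (h : Continuous fun x => (⟨f x, hc x⟩ : C(F, G))) :
    Continuous[Kelley (inferInstance : TopologicalSpace (X × F)), _]
      (fun p : X × F => f p.1 p.2) := by
  refine continuous_kelley_prod_iff.2 fun L K _ hK => ?_
  -- compact Hausdorff, hence locally compact, so that evaluation on `C(K, G) × K` is continuous
  have : CompactSpace K := isCompact_iff_compactSpace.1 hK
  have hXK : Continuous fun p : X × K => f p.1 p.2 :=
    continuous_eval.comp (((ContinuousMap.continuous_restrict K).comp h).prodMap continuous_id)
  rw [continuousOn_iff_continuous_domRestrict]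
  exact hXK.comp ((continuous_fst.comp continuous_subtype_val).prodMk
    ((continuous_snd.comp continuous_subtype_val).subtype_mk fun p => p.2.2))

end Curry

theorem uncurry_continuous_iff_into_Lcg_general {E F G : Type*}
    [AddCommGroup E] [Module ℝ E] [AddCommGroup F] [Module ℝ F] [AddCommGroup G] [Module ℝ G]
    [tE : TopologicalSpace E] [tF : TopologicalSpace F] [tG : TopologicalSpace G]
    (hE : IsCGVS tE) (hF : IsCGVS tF)
    (U : Set E) (hU : IsOpen U) (f₁ : U → F →ₗ[ℝ] G) :
    Continuous[Kelley (inferInstance : TopologicalSpace (↥U × F)), tG]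
      (fun p : ↥U × F => f₁ p.1 p.2) ↔
    ∃ hc : ∀ x : U, Continuous ⇑(f₁ x),
      Continuous[inferInstance,
          Kelley (TopologicalSpace.induced Subtype.val
            (ContinuousMap.compactOpen : TopologicalSpace C(F, G)))]
        (fun x : U => (⟨⟨⇑(f₁ x), hc x⟩,
          ⟨fun a b => (f₁ x).map_add a b, fun c y => (f₁ x).map_smul c y⟩⟩ :
            {g : C(F, G) // IsLinearMap ℝ ⇑g})) := by
  have : T2Space E := hE.1.1
  have : T2Space F := hF.1.1
  have : CompactlyCoherentSpace E := kelley_eq_self_iff.1 hE.1.2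
  have : CompactlyCoherentSpace F := kelley_eq_self_iff.1 hF.1.2
  have : CompactlyCoherentSpace U := hU.compactlyCoherentSpace
  constructor
  · intro h
    have hc := continuous_apply_of_continuous_kelley_uncurry (f := fun x => ⇑(f₁ x)) h
    exact ⟨hc, (continuous_induced_rng.2
      (continuous_curry_of_continuous_kelley_uncurry h hc)).kelley_rng⟩
  · rintro ⟨hc, h⟩
    exact continuous_kelley_uncurry_of_continuous_curry hc
      (continuous_induced_rng.1 (continuous_le_rng (kelley_le _) h))

/-- For real compactly generated vector spaces `E`, `F`, `G`, an open `U ⊆ E`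
and a family `f₁` of linear maps `F → G` indexed by `U`, the uncurried map
`(x,v) ↦ f₁ x v` is continuous from the Kelleyfication of the product topology to `G` iff
each `f₁ x` is continuous and `f₁` is continuous into `L_cg(F,G)`, the continuous linear
maps with the Kelleyfication of the subspace topology of the compact-open topology. -/
theorem uncurry_continuous_iff_into_Lcg {E F G : Type*}
    [AddCommGroup E] [Module ℝ E] [AddCommGroup F] [Module ℝ F] [AddCommGroup G] [Module ℝ G]
    [tE : TopologicalSpace E] [tF : TopologicalSpace F] [tG : TopologicalSpace G]
    (hE : IsCGVS tE) (hF : IsCGVS tF) (hG : IsCGVS tG)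
    (U : Set E) (hU : IsOpen U) (f₁ : U → F →ₗ[ℝ] G) :
    Continuous[Kelley (inferInstance : TopologicalSpace (↥U × F)), tG]
      (fun p : ↥U × F => f₁ p.1 p.2) ↔
    ∃ hc : ∀ x : U, Continuous ⇑(f₁ x),
      Continuous[inferInstance,
          Kelley (TopologicalSpace.induced Subtype.val
            (ContinuousMap.compactOpen : TopologicalSpace C(F, G)))]
        (fun x : U => (⟨⟨⇑(f₁ x), hc x⟩,
          ⟨fun a b => (f₁ x).map_add a b, fun c y => (f₁ x).map_smul c y⟩⟩ :
            {g : C(F, G) // IsLinearMap ℝ ⇑g})) :=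
  uncurry_continuous_iff_into_Lcg_general (tE := tE) (tF := tF) (tG := tG) hE hF U hU f₁
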